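/- arXiv:2103.13142 — 7 statements merged into one kernel-verified Lean document; each statement's English description precedes it below -/
import Mathlib

section
/- Let T be a p×p real matrix every eigenvalue of which, viewed over ℂ, has strictly negative real part; let e be the all-ones vector in ℝ^p, t := −T e, and π ∈ ℝ^p with π·e = 1. Then ∫₀^∞ π·(exp(zT) t) dz = 1, i.e., f_Z(z) = π exp(Tz) t is a probability density on (0,∞). -/
open Matrix MeasureTheory

/-!
With `t = -T e`, the integrand is the derivative of `z ↦ -π ⬝ᵥ exp (z T) e`, so the integral is
`π ⬝ᵥ e - lim_{z → ∞} π ⬝ᵥ exp (z T) e = 1` as soon as the entries of `exp (z T)` decay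
exponentially; this also gives integrability. For the decay, split `ℂ^p` into generalized
eigenspaces of `T`: on the one of `μ`, `exp (z T)` acts as `e^{z μ}` times a polynomial in `z`,
which is `O(e^{-b z})` for every `b < -Re μ`.
-/

open Filter Asymptotics Topology Set NormedSpace
open scoped Nat

def ExpDecaying {E : Type*} [Norm E] (f : ℝ → E) : Prop :=
  ∃ b > 0, f =O[atTop] fun z => Real.exp (-b * z)

theorem Real.isBigO_exp_neg_mul_of_le {b c : ℝ} (h : c ≤ b) :
    (fun z => Real.exp (-b * z)) =O[atTop] fun z => Real.exp (-c * z) := by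
  refine IsBigO.of_bound 1 ?_
  filter_upwards [eventually_ge_atTop 0] with z hz
  simp only [Real.norm_eq_abs, Real.abs_exp, one_mul]
  exact Real.exp_le_exp.2 (by nlinarith)

namespace ExpDecaying

variable {E F : Type*} [NormedAddCommGroup E] [Norm F] {f g : ℝ → E}

theorem zero : ExpDecaying fun _ : ℝ => (0 : E) :=
  ⟨1, one_pos, isBigO_zero _ _⟩

theorem of_isBigO {h : ℝ → F} (hg : ExpDecaying g) (hfg : h =O[atTop] g) : ExpDecaying h :=
  let ⟨b, hb, hgb⟩ := hg
  ⟨b, hb, hfg.trans hgb⟩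

theorem add (hf : ExpDecaying f) (hg : ExpDecaying g) : ExpDecaying fun z => f z + g z := by
  obtain ⟨b, hb, hfb⟩ := hf
  obtain ⟨c, hc, hgc⟩ := hg
  exact ⟨min b c, lt_min hb hc,
    (hfb.trans (Real.isBigO_exp_neg_mul_of_le (min_le_left b c))).add
      (hgc.trans (Real.isBigO_exp_neg_mul_of_le (min_le_right b c)))⟩

theorem tendsto_zero (hf : ExpDecaying f) : Tendsto f atTop (𝓝 0) := by
  obtain ⟨b, hb, hfb⟩ := hf
  exact hfb.trans_tendsto <|
    Real.tendsto_exp_atBot.comp (tendsto_id.const_mul_atTop_of_neg (neg_neg_of_pos hb))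

theorem integrableOn_Ioi {f : ℝ → ℝ} (hf : ExpDecaying f) {a : ℝ} (hc : ContinuousOn f (Ici a)) :
    IntegrableOn f (Ioi a) :=
  let ⟨_, hb, hfb⟩ := hf
  integrable_of_isBigO_exp_neg hb hc hfb

end ExpDecaying

theorem Complex.isBigO_exp_mul_pow {μ : ℂ} {b : ℝ} (hb : b < -μ.re) (n : ℕ) :
    (fun z : ℝ => Complex.exp (z * μ) * (z : ℂ) ^ n) =O[atTop] fun z => Real.exp (-b * z) := by
  have hnorm : (fun z : ℝ => Complex.exp (z * μ) * (z : ℂ) ^ n) =O[atTop]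
      fun z => Real.exp (μ.re * z) * z ^ n :=
    isBigO_of_le _ fun z => by simp [Complex.norm_exp, mul_comm]
  have hpow := isLittleO_pow_exp_pos_mul_atTop n (by linarith : 0 < -b - μ.re)
  refine hnorm.trans (((isBigO_refl _ _).mul hpow.isBigO).congr_right fun z => ?_)
  rw [← Real.exp_add]
  ring_nf

namespace Matrix

open scoped Norms.Operator

variable {ι : Type*} [Fintype ι] [DecidableEq ι]

theorem exp_mulVec_eq_sum_of_pow_mulVec_eq_zero {𝕂 : Type*} [RCLike 𝕂] {N : Matrix ι ι 𝕂}
    {u : ι → 𝕂} {k : ℕ} (hk : N ^ k *ᵥ u = 0) :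
    exp N *ᵥ u = ∑ n ∈ Finset.range k, (n ! : 𝕂)⁻¹ • (N ^ n *ᵥ u) := by
  have hsum := (expSeries_summable' (𝕂 := 𝕂) N).hasSum.map (mulVec.addMonoidHomLeft u)
    (continuous_id.matrix_mulVec continuous_const)
  calc exp N *ᵥ u = ∑' n, ((n ! : 𝕂)⁻¹ • N ^ n) *ᵥ u := by
        rw [exp_eq_tsum 𝕂]; exact hsum.tsum_eq.symm
    _ = ∑ n ∈ Finset.range k, ((n ! : 𝕂)⁻¹ • N ^ n) *ᵥ u := by
        refine tsum_eq_sum fun n hn => ?_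
        rw [smul_mulVec, ← Nat.sub_add_cancel (not_lt.1 (Finset.mem_range.not.1 hn)), pow_add,
          ← mulVec_mulVec, hk, mulVec_zero, smul_zero]
    _ = _ := by simp only [smul_mulVec]

theorem exp_smul_mulVec_eq_of_pow_sub_smul_mulVec_eq_zero {M : Matrix ι ι ℂ} {μ : ℂ}
    {u : ι → ℂ} {k : ℕ} (hk : (M - μ • 1) ^ k *ᵥ u = 0) (t : ℂ) :
    exp (t • M) *ᵥ u = Complex.exp (t * μ) •
      ∑ n ∈ Finset.range k, (t ^ n * (n ! : ℂ)⁻¹) • ((M - μ • 1) ^ n *ᵥ u) := by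
  set N := M - μ • 1
  have hsplit : t • M = algebraMap ℂ _ (t * μ) + t • N := by
    rw [Algebra.algebraMap_eq_smul_one, smul_sub, smul_smul]; abel
  have hcomm : Commute (algebraMap ℂ (Matrix ι ι ℂ) (t * μ)) (t • N) := Algebra.commutes _ _
  have htk : (t • N) ^ k *ᵥ u = 0 := by rw [smul_pow, smul_mulVec, hk, smul_zero]
  have hscalar : exp (algebraMap ℂ (Matrix ι ι ℂ) (t * μ)) = Complex.exp (t * μ) • 1 := by
    rw [Complex.exp_eq_exp_ℂ, ← Algebra.algebraMap_eq_smul_one]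
    exact (algebraMap_exp_comm _).symm
  rw [hsplit, exp_add_of_commute _ _ hcomm, hscalar, smul_mul_assoc, one_mul, smul_mulVec,
    exp_mulVec_eq_sum_of_pow_mulVec_eq_zero htk]
  simp [smul_pow, smul_mulVec, smul_smul, mul_comm]

theorem mem_spectrum_of_pow_sub_smul_mulVec_eq_zero {K : Type*} [Field K] {M : Matrix ι ι K}
    {μ : K} {u : ι → K} (hu : u ≠ 0) {k : ℕ} (hk : (M - μ • 1) ^ k *ᵥ u = 0) :
    μ ∈ spectrum K M := by
  rw [spectrum.mem_iff, Algebra.algebraMap_eq_smul_one, ← neg_sub]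
  intro hunit
  have hinj := mulVec_injective_iff_isUnit.2 (hunit.neg.pow k)
  rw [neg_neg] at hinj
  exact hu (hinj (hk.trans (mulVec_zero _).symm))

theorem expDecaying_dotProduct_exp_smul_mulVec_of_pow_sub_smul_mulVec_eq_zero
    {M : Matrix ι ι ℂ} {μ : ℂ} (hμ : μ.re < 0) {u : ι → ℂ} {k : ℕ}
    (hk : (M - μ • 1) ^ k *ᵥ u = 0) (w : ι → ℂ) :
    ExpDecaying fun z : ℝ => w ⬝ᵥ (exp (z • M) *ᵥ u) := by
  have hformula : (fun z : ℝ => w ⬝ᵥ (exp (z • M) *ᵥ u)) = ∑ n ∈ Finset.range k,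
      fun z : ℝ => (n ! : ℂ)⁻¹ * w ⬝ᵥ ((M - μ • 1) ^ n *ᵥ u) *
        (Complex.exp (z * μ) * (z : ℂ) ^ n) := by
    ext z
    rw [← Complex.coe_smul, exp_smul_mulVec_eq_of_pow_sub_smul_mulVec_eq_zero hk]
    simp only [dotProduct_smul, dotProduct_sum, smul_eq_mul, Finset.mul_sum, Finset.sum_apply]
    ring_nf
  rw [hformula]
  exact ⟨-μ.re / 2, by linarith, IsBigO.sum fun n _ =>
    (Complex.isBigO_exp_mul_pow (by linarith) n).const_mul_left _⟩

theorem expDecaying_dotProduct_exp_smul_mulVec {M : Matrix ι ι ℂ}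
    (hM : ∀ μ ∈ spectrum ℂ M, μ.re < 0) (w u : ι → ℂ) :
    ExpDecaying fun z : ℝ => w ⬝ᵥ (exp (z • M) *ᵥ u) := by
  have hu : u ∈ ⨆ μ, Module.End.maxGenEigenspace (toLinAlgEquiv' M) μ := by
    rw [Module.End.iSup_maxGenEigenspace_eq_top]; trivial
  refine Submodule.iSup_induction _ (motive := fun v => ExpDecaying fun z : ℝ =>
    w ⬝ᵥ (exp (z • M) *ᵥ v)) hu (fun μ v hv => ?_) (by simpa using ExpDecaying.zero)
    (fun v v' hv hv' => by simpa [mulVec_add, dotProduct_add] using hv.add hv')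
  obtain ⟨k, hk⟩ := (Module.End.mem_maxGenEigenspace _ _ _).1 hv
  have hk' : (M - μ • 1) ^ k *ᵥ v = 0 := by
    rwa [← map_one (toLinAlgEquiv' (R := ℂ) (n := ι)), ← map_smul, ← map_sub, ← map_pow,
      toLinAlgEquiv'_apply] at hk
  rcases eq_or_ne v 0 with rfl | hv0
  · simpa using ExpDecaying.zero
  · exact expDecaying_dotProduct_exp_smul_mulVec_of_pow_sub_smul_mulVec_eq_zero
      (hM μ (mem_spectrum_of_pow_sub_smul_mulVec_eq_zero hv0 hk')) hk' w

theorem exp_map_algebraMap {𝕂 : Type*} [RCLike 𝕂] (A : Matrix ι ι ℝ) :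
    exp (A.map (algebraMap ℝ 𝕂)) = (exp A).map (algebraMap ℝ 𝕂) :=
  (map_exp (algebraMap ℝ 𝕂).mapMatrix (continuous_id.matrix_map RCLike.continuous_ofReal) A).symm

theorem expDecaying_dotProduct_exp_smul_mulVec_real {T : Matrix ι ι ℝ}
    (hT : ∀ μ ∈ spectrum ℂ (T.map (algebraMap ℝ ℂ)), μ.re < 0) (w u : ι → ℝ) :
    ExpDecaying fun z : ℝ => w ⬝ᵥ (exp (z • T) *ᵥ u) := by
  refine (expDecaying_dotProduct_exp_smul_mulVec hT ((↑) ∘ w) ((↑) ∘ u)).of_isBigO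
    (isBigO_of_le _ fun z => le_of_eq ?_)
  have hsmul : z • T.map (algebraMap ℝ ℂ) = (z • T).map (algebraMap ℝ ℂ) := by
    ext; simp
  rw [← Complex.norm_real, hsmul, exp_map_algebraMap, ← Complex.coe_algebraMap,
    RingHom.map_dotProduct]
  congr 2
  ext i
  exact RingHom.map_mulVec _ _ _ i

theorem hasDerivAt_dotProduct_exp_smul_mulVec {𝕂 : Type*} [RCLike 𝕂] (A : Matrix ι ι 𝕂)
    (w u : ι → 𝕂) (x : 𝕂) :
    HasDerivAt (fun z => w ⬝ᵥ (exp (z • A) *ᵥ u)) (w ⬝ᵥ (exp (x • A) *ᵥ (A *ᵥ u))) x := by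
  let Φ : Matrix ι ι 𝕂 →L[𝕂] 𝕂 := LinearMap.toContinuousLinearMap
    { toFun B := w ⬝ᵥ (B *ᵥ u)
      map_add' B C := by rw [add_mulVec, dotProduct_add]
      map_smul' c B := by rw [smul_mulVec, dotProduct_smul]; rfl }
  have hΦ : Φ (exp (x • A) * A) = w ⬝ᵥ (exp (x • A) *ᵥ (A *ᵥ u)) := by
    rw [mulVec_mulVec]; rfl
  exact (Φ.hasFDerivAt.comp_hasDerivAt x (hasDerivAt_exp_smul_const A x)).congr_deriv hΦ

end Matrix

theorem phaseType_density_integral_eq_one_general {p : ℕ} (T : Matrix (Fin p) (Fin p) ℝ)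
    (hT : ∀ μ ∈ spectrum ℂ (T.map (algebraMap ℝ ℂ)), μ.re < 0)
    (e : Fin p → ℝ) (t : Fin p → ℝ) (ht : t = (-T) *ᵥ e)
    (π : Fin p → ℝ) (hπ : π ⬝ᵥ e = 1) :
    ∫ z in Set.Ioi (0 : ℝ), π ⬝ᵥ (NormedSpace.exp (z • T) *ᵥ t) = 1 := by
  have hderiv (x : ℝ) : HasDerivAt (fun z : ℝ => -(π ⬝ᵥ (exp (z • T) *ᵥ e)))
      (π ⬝ᵥ (exp (x • T) *ᵥ t)) x := by
    rw [ht, neg_mulVec, mulVec_neg, dotProduct_neg]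
    exact (hasDerivAt_dotProduct_exp_smul_mulVec T π e x).neg
  have hdecay := expDecaying_dotProduct_exp_smul_mulVec_real hT π
  have hint : IntegrableOn (fun z : ℝ => π ⬝ᵥ (exp (z • T) *ᵥ t)) (Ioi 0) :=
    (hdecay t).integrableOn_Ioi fun x _ =>
      (hasDerivAt_dotProduct_exp_smul_mulVec T π t x).continuousAt.continuousWithinAt
  rw [integral_Ioi_of_hasDerivAt_of_tendsto' (fun x _ => hderiv x) hint
    (by simpa using (hdecay e).tendsto_zero.neg)]
  simp [hπ]

/-- If all complex eigenvalues of `T` have strictly negative real part and `π ⬝ e = 1`,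
then `f_Z(z) = π exp(Tz) t` (with `t = -T e`) integrates to 1 on `(0, ∞)`,
i.e., it is a probability density. -/
theorem phaseType_density_integral_eq_one {p : ℕ} (T : Matrix (Fin p) (Fin p) ℝ)
    (hT : ∀ μ ∈ spectrum ℂ (T.map (algebraMap ℝ ℂ)), μ.re < 0)
    (e : Fin p → ℝ) (he : e = fun _ => 1) (t : Fin p → ℝ) (ht : t = (-T) *ᵥ e)
    (π : Fin p → ℝ) (hπ : π ⬝ᵥ e = 1) :
    ∫ z in Set.Ioi (0 : ℝ), π ⬝ᵥ (NormedSpace.exp (z • T) *ᵥ t) = 1 :=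
  phaseType_density_integral_eq_one_general T hT e t ht π hπ
end

section
/- Let T be a p×p real matrix every eigenvalue of which, viewed over ℂ, has strictly negative real part; let e be the all-ones vector in ℝ^p, t := −T e, and π ∈ ℝ^p. Then for every n ∈ ℕ with n ≥ 1, ∫₀^∞ zⁿ · (π·(exp(zT) t)) dz = n! · π·((−T)⁻ⁿ e). (The n-th moment of a phase-type distribution PH(π, T) equals n! π (−T)^{−n} e.) -/
/-!
Let `B = ∫₀^∞ exp(zT) dz`. The eigenvalues of `exp T` are the `exp μ` with `μ` an eigenvalue of `T`,
so the spectral radius of `exp T` is `< 1`, and Gelfand's formula makes `‖exp(zT)‖` decay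
exponentially; hence every moment integral converges. Integrating `d/dz exp(zT) = exp(zT) T`
gives `B T = -1`, i.e. `B = (-T)⁻¹`, and integrating the derivative of `z^(n+1) B exp(zT)` gives
`∫ z^(n+1) exp(zT) = (n+1) B ∫ z^n exp(zT)`, hence `∫ zⁿ exp(zT) = n! (-T)⁻¹^(n+1)`. Pairing with
`π` and `t = -T e` gives the moment formula.
-/

open Matrix MeasureTheory NormedSpace Filter Asymptotics Set Topology
open scoped Nat

theorem Module.End.exists_hasEigenvector_of_commute {K V : Type*} [Field K] [IsAlgClosed K]
    [AddCommGroup V] [Module K V] [FiniteDimensional K V] {f g : Module.End K V}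
    (hfg : Commute f g) {ν : K} (hν : g.HasEigenvalue ν) :
    ∃ μ v, f.HasEigenvector μ v ∧ g.HasEigenvector ν v := by
  set E := g.eigenspace ν
  have : Nontrivial E := Submodule.nontrivial_iff_ne_bot.2 hν
  obtain ⟨μ, hμ⟩ := exists_eigenvalue (f.restrict (mapsTo_genEigenspace_of_comm hfg.symm ν 1))
  obtain ⟨v, hv⟩ := hμ.exists_hasEigenvector
  have hv0 : (v : V) ≠ 0 := by simpa using hv.2
  exact ⟨μ, v, ⟨mem_eigenspace_iff.2 (congrArg Subtype.val hv.apply_eq_smul), hv0⟩, v.2, hv0⟩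

theorem spectrum.eventually_norm_pow_le_of_spectralRadius_lt {A : Type*} [NormedRing A]
    [NormedAlgebra ℂ A] [CompleteSpace A] {a : A} {r : ℝ}
    (h : spectralRadius ℂ a < ENNReal.ofReal r) : ∀ᶠ n : ℕ in atTop, ‖a ^ n‖ ≤ r ^ n := by
  filter_upwards [(pow_norm_pow_one_div_tendsto_nhds_spectralRadius a).eventually_lt_const h,
    eventually_ge_atTop 1] with n hn hn1
  have hlt : ‖a ^ n‖ ^ (1 / n : ℝ) < r := (ENNReal.ofReal_lt_ofReal_iff'.1 hn).1
  calc ‖a ^ n‖ = (‖a ^ n‖ ^ (1 / n : ℝ)) ^ n := by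
        rw [one_div, Real.rpow_inv_natCast_pow (norm_nonneg _) (by omega)]
    _ ≤ r ^ n := pow_le_pow_left₀ (by positivity) hlt.le n

section ExpDecay

variable {𝔸 : Type*} [NormedRing 𝔸] [NormedAlgebra ℝ 𝔸]

theorem continuous_exp_smul [CompleteSpace 𝔸] (a : 𝔸) : Continuous fun z : ℝ => exp (z • a) :=
  continuous_iff_continuousAt.2 fun z => (hasDerivAt_exp_smul_const a z).continuousAt

theorem isBigO_exp_smul_of_norm_exp_pow_le [CompleteSpace 𝔸] {a : 𝔸} {c : ℝ}
    (h : ∀ᶠ n : ℕ in atTop, ‖exp a ^ n‖ ≤ Real.exp (-c) ^ n) :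
    (fun z : ℝ => exp (z • a)) =O[atTop] fun z => Real.exp (-c * z) := by
  obtain ⟨N, hN⟩ := eventually_atTop.1 h
  obtain ⟨M, hM⟩ : ∃ M, ∀ s ∈ Icc (0 : ℝ) 1, ‖exp (s • a)‖ ≤ M :=
    isCompact_Icc.exists_bound_of_continuousOn (continuous_exp_smul a).continuousOn
  have hM0 : 0 ≤ M := (norm_nonneg _).trans (hM 0 (by simp))
  refine IsBigO.of_bound (M * Real.exp |c|) ?_
  filter_upwards [eventually_ge_atTop (N : ℝ), eventually_ge_atTop 0] with z hzN hz0
  set n := ⌊z⌋₊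
  have hn : (n : ℝ) ≤ z := Nat.floor_le hz0
  have hn' : z < n + 1 := Nat.lt_floor_add_one z
  have hsplit : exp (z • a) = exp a ^ n * exp ((z - n) • a) := by
    -- `exp_nsmul` and `exp_add_of_commute` are stated for normed `ℚ`-algebras.
    let := NormedAlgebra.restrictScalars ℚ ℝ 𝔸
    rw [← NormedSpace.exp_nsmul, ← Nat.cast_smul_eq_nsmul ℝ, ← NormedSpace.exp_add_of_commute
      (((Commute.refl a).smul_left _).smul_right _), ← add_smul, add_sub_cancel]
  have hexp : Real.exp (-c) ^ n ≤ Real.exp |c| * Real.exp (-c * z) := by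
    rw [← Real.exp_nat_mul, ← Real.exp_add]
    gcongr
    nlinarith [abs_nonneg c, neg_abs_le c, le_abs_self c]
  calc ‖exp (z • a)‖ ≤ ‖exp a ^ n‖ * ‖exp ((z - n) • a)‖ := hsplit ▸ norm_mul_le _ _
    _ ≤ Real.exp (-c) ^ n * M :=
        mul_le_mul (hN n (Nat.le_floor hzN)) (hM _ ⟨by linarith, by linarith⟩)
          (norm_nonneg _) (by positivity)
    _ ≤ M * Real.exp |c| * ‖Real.exp (-c * z)‖ := by
        rw [Real.norm_of_nonneg (Real.exp_pos _).le]; nlinarith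

variable {a : 𝔸} {c : ℝ}

theorem isBigO_pow_smul_exp_smul (hc : 0 < c)
    (ha : (fun z : ℝ => exp (z • a)) =O[atTop] fun z => Real.exp (-c * z)) (n : ℕ) :
    (fun z : ℝ => z ^ n • exp (z • a)) =O[atTop] fun z => Real.exp (-(c / 2) * z) := by
  refine ((isLittleO_pow_exp_pos_mul_atTop n (half_pos hc)).isBigO.smul ha).congr_right
    fun z => ?_
  rw [smul_eq_mul, ← Real.exp_add]
  ring_nf

theorem integrableOn_pow_smul_exp_smul [CompleteSpace 𝔸] (hc : 0 < c)
    (ha : (fun z : ℝ => exp (z • a)) =O[atTop] fun z => Real.exp (-c * z)) (n : ℕ) :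
    IntegrableOn (fun z : ℝ => z ^ n • exp (z • a)) (Ioi 0) := by
  have hcont : Continuous fun z : ℝ => z ^ n • exp (z • a) :=
    (continuous_pow n).smul (continuous_exp_smul a)
  exact (integrable_norm_iff hcont.aestronglyMeasurable).1 <| integrable_of_isBigO_exp_neg
    (half_pos hc) hcont.norm.continuousOn (isBigO_pow_smul_exp_smul hc ha n).norm_left

theorem tendsto_pow_smul_exp_smul (hc : 0 < c)
    (ha : (fun z : ℝ => exp (z • a)) =O[atTop] fun z => Real.exp (-c * z)) (n : ℕ) :
    Tendsto (fun z : ℝ => z ^ n • exp (z • a)) atTop (𝓝 0) :=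
  (isBigO_pow_smul_exp_smul hc ha n).trans_tendsto <| Real.tendsto_exp_atBot.comp <|
    tendsto_id.const_mul_atTop_of_neg (neg_lt_zero.2 (half_pos hc))

theorem integral_exp_smul_mul [CompleteSpace 𝔸] (hc : 0 < c)
    (ha : (fun z : ℝ => exp (z • a)) =O[atTop] fun z => Real.exp (-c * z)) :
    (∫ z in Ioi (0 : ℝ), exp (z • a)) * a = -1 := by
  have hint : IntegrableOn (fun z : ℝ => exp (z • a)) (Ioi 0) := by
    simpa using integrableOn_pow_smul_exp_smul hc ha 0
  have hlim : Tendsto (fun z : ℝ => exp (z • a)) atTop (𝓝 0) := by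
    simpa using tendsto_pow_smul_exp_smul hc ha 0
  rw [← integral_mul_const_of_integrable hint, integral_Ioi_of_hasDerivAt_of_tendsto'
    (fun z _ => hasDerivAt_exp_smul_const a z) (hint.mul_const a) hlim]
  simp

theorem integral_pow_succ_smul_exp_smul [CompleteSpace 𝔸] (hc : 0 < c)
    (ha : (fun z : ℝ => exp (z • a)) =O[atTop] fun z => Real.exp (-c * z)) (n : ℕ) :
    ∫ z in Ioi (0 : ℝ), z ^ (n + 1) • exp (z • a) =
      (n + 1 : ℝ) •
        ((∫ z in Ioi (0 : ℝ), exp (z • a)) * ∫ z in Ioi (0 : ℝ), z ^ n • exp (z • a)) := by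
  set B := ∫ z in Ioi (0 : ℝ), exp (z • a)
  have hB : B * a = -1 := integral_exp_smul_mul hc ha
  have hderiv : ∀ z ∈ Ici (0 : ℝ), HasDerivAt (fun z : ℝ => z ^ (n + 1) • (B * exp (z • a)))
      ((n + 1 : ℝ) • (B * (z ^ n • exp (z • a))) - z ^ (n + 1) • exp (z • a)) z := by
    intro z _
    refine ((hasDerivAt_pow (n + 1) z).smul
      ((hasDerivAt_exp_smul_const' a z).const_mul B)).congr_deriv ?_
    rw [← mul_assoc, hB, neg_one_mul, smul_neg, mul_smul_comm, smul_smul]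
    push_cast
    abel
  have hint := integrableOn_pow_smul_exp_smul hc ha
  have hlim : Tendsto (fun z : ℝ => z ^ (n + 1) • (B * exp (z • a))) atTop (𝓝 0) := by
    simpa [mul_smul_comm] using (tendsto_pow_smul_exp_smul hc ha (n + 1)).const_mul B
  have hint' : IntegrableOn (fun z : ℝ => (n + 1 : ℝ) • (B * (z ^ n • exp (z • a)))) (Ioi 0) :=
    ((hint n).const_mul B).smul (n + 1 : ℝ)
  have hfin := integral_Ioi_of_hasDerivAt_of_tendsto' hderiv (hint'.sub (hint (n + 1))) hlim
  rw [integral_sub hint' (hint (n + 1)), integral_smul,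
    integral_const_mul_of_integrable (hint n), zero_pow n.succ_ne_zero, zero_smul, sub_zero,
    sub_eq_zero] at hfin
  exact hfin.symm

theorem integral_pow_smul_exp_smul [CompleteSpace 𝔸] (hc : 0 < c)
    (ha : (fun z : ℝ => exp (z • a)) =O[atTop] fun z => Real.exp (-c * z)) (n : ℕ) :
    ∫ z in Ioi (0 : ℝ), z ^ n • exp (z • a) =
      (n ! : ℝ) • (∫ z in Ioi (0 : ℝ), exp (z • a)) ^ (n + 1) := by
  induction n with
  | zero => simp
  | succ n ih =>
    rw [integral_pow_succ_smul_exp_smul hc ha, ih, mul_smul_comm, smul_smul, pow_succ' _ (n + 1),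
      Nat.factorial_succ]
    push_cast
    ring_nf

end ExpDecay

section MatrixExp

attribute [local instance] Matrix.linftyOpNormedAddCommGroup Matrix.linftyOpNormedSpace
  Matrix.linftyOpNormedRing Matrix.linftyOpNormedAlgebra
-- Otherwise `exp` and the Bochner integral would use the product topology on matrices, which is
-- not reducibly defeq to the topology of the `L∞` operator norm.
attribute [-instance] instTopologicalSpaceMatrix Matrix.instUniformSpace

variable {m n : Type*} [Fintype m] [Fintype n]

theorem Matrix.linfty_opNorm_map_eq {α β : Type*} [NormedAddCommGroup α] [NormedAddCommGroup β]
    (A : Matrix m n α) (f : α → β) (hf : ∀ a, ‖f a‖₊ = ‖a‖₊) : ‖A.map f‖ = ‖A‖ := by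
  simp [linfty_opNorm_def, hf]

theorem Matrix.integral_dotProduct_mulVec {X : Type*} [MeasurableSpace X]
    {μ : Measure X} {f : X → Matrix m n ℝ} (hf : Integrable f μ) (u : m → ℝ) (v : n → ℝ) :
    ∫ x, u ⬝ᵥ (f x *ᵥ v) ∂μ = u ⬝ᵥ ((∫ x, f x ∂μ) *ᵥ v) :=
  let L : Matrix m n ℝ →ₗ[ℝ] ℝ :=
    { toFun M := u ⬝ᵥ (M *ᵥ v)
      map_add' M N := by rw [add_mulVec, dotProduct_add]
      map_smul' c M := by rw [smul_mulVec, dotProduct_smul, RingHom.id_apply] }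
  L.toContinuousLinearMap.integral_comp_comm hf

variable [DecidableEq n]

theorem Matrix.exp_mulVec_of_mulVec_eq_smul {𝕂 : Type*} [RCLike 𝕂] {A : Matrix n n 𝕂} {μ : 𝕂}
    {v : n → 𝕂} (h : A *ᵥ v = μ • v) : exp A *ᵥ v = exp μ • v := by
  let L : Matrix n n 𝕂 →L[𝕂] n → 𝕂 :=
    LinearMap.toContinuousLinearMap ((LinearMap.applyₗ v).comp Matrix.toLin'.toLinearMap)
  have hpow : ∀ k : ℕ, A ^ k *ᵥ v = μ ^ k • v := by
    intro k
    induction k with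
    | zero => simp
    | succ k ih => rw [pow_succ, ← mulVec_mulVec, h, mulVec_smul, ih, smul_smul, pow_succ']
  have hsum := (exp_series_hasSum_exp' (𝕂 := 𝕂) A).mapL L
  refine hsum.unique ((exp_series_hasSum_exp' (𝕂 := 𝕂) μ).smul_const v |>.congr_fun fun k => ?_)
  change (((k ! : 𝕂))⁻¹ • A ^ k) *ᵥ v = _
  rw [smul_mulVec, hpow, smul_smul, smul_eq_mul]

theorem Matrix.spectrum_exp_subset (A : Matrix n n ℂ) :
    spectrum ℂ (exp A) ⊆ Complex.exp '' spectrum ℂ A := by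
  intro ν hν
  rw [← spectrum_toLin', ← Module.End.hasEigenvalue_iff_mem_spectrum] at hν
  obtain ⟨μ, v, hμ, hν⟩ := Module.End.exists_hasEigenvector_of_commute
    (((Commute.refl A).exp_right).map Matrix.toLinAlgEquiv') hν
  have hexp : exp A *ᵥ v = Complex.exp μ • v :=
    Complex.exp_eq_exp_ℂ ▸ exp_mulVec_of_mulVec_eq_smul hμ.apply_eq_smul
  refine ⟨μ, ?_, smul_left_injective ℂ hν.2 (hexp.symm.trans hν.apply_eq_smul)⟩
  rw [← spectrum_toLin', ← Module.End.hasEigenvalue_iff_mem_spectrum]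
  exact Module.End.hasEigenvalue_of_hasEigenvector hμ

theorem Matrix.exists_spectralRadius_exp_lt (A : Matrix n n ℂ)
    (hA : ∀ μ ∈ spectrum ℂ A, μ.re < 0) :
    ∃ c > 0, spectralRadius ℂ (exp A) < ENNReal.ofReal (Real.exp (-c)) := by
  rcases (spectrum ℂ (exp A)).eq_empty_or_nonempty with h | h
  · exact ⟨1, one_pos, by simp [spectralRadius, h, Real.exp_pos]⟩
  obtain ⟨_, hν, hρ⟩ := spectrum.exists_nnnorm_eq_spectralRadius_of_nonempty h
  obtain ⟨μ, hμ, rfl⟩ := A.spectrum_exp_subset hν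
  refine ⟨-μ.re / 2, by linarith [hA μ hμ], ?_⟩
  rw [← hρ, ← enorm_eq_nnnorm, ← ofReal_norm, Complex.norm_exp,
    ENNReal.ofReal_lt_ofReal_iff (Real.exp_pos _)]
  exact Real.exp_lt_exp.2 (by linarith [hA μ hμ])

theorem Matrix.exp_map_algebraMap_s2 (M : Matrix n n ℝ) :
    exp (M.map (algebraMap ℝ ℂ)) = (exp M).map (algebraMap ℝ ℂ) :=
  (map_exp (algebraMap ℝ ℂ).mapMatrix (continuous_id.matrix_map Complex.continuous_ofReal) M).symm

theorem Matrix.isBigO_exp_smul_of_re_neg (T : Matrix n n ℝ)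
    (hT : ∀ μ ∈ spectrum ℂ (T.map (algebraMap ℝ ℂ)), μ.re < 0) :
    ∃ c > 0, (fun z : ℝ => exp (z • T)) =O[atTop] fun z => Real.exp (-c * z) := by
  obtain ⟨c, hc, hρ⟩ := exists_spectralRadius_exp_lt _ hT
  refine ⟨c, hc, isBigO_exp_smul_of_norm_exp_pow_le ?_⟩
  filter_upwards [spectrum.eventually_norm_pow_le_of_spectralRadius_lt hρ] with k hk
  rwa [exp_map_algebraMap_s2, ← RingHom.mapMatrix_apply, ← map_pow, RingHom.mapMatrix_apply,
    linfty_opNorm_map_eq _ (algebraMap ℝ ℂ) Complex.nnnorm_real] at hk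

theorem Matrix.integral_pow_mul_dotProduct_exp_smul_mulVec (T : Matrix n n ℝ)
    (hT : ∀ μ ∈ spectrum ℂ (T.map (algebraMap ℝ ℂ)), μ.re < 0) (u v : n → ℝ) (k : ℕ) :
    ∫ z in Ioi (0 : ℝ), z ^ k * (u ⬝ᵥ (exp (z • T) *ᵥ ((-T) *ᵥ v))) =
      k ! * (u ⬝ᵥ ((-T)⁻¹ ^ k *ᵥ v)) := by
  obtain ⟨c, hc, hdecay⟩ := T.isBigO_exp_smul_of_re_neg hT
  set B := ∫ z in Ioi (0 : ℝ), exp (z • T)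
  have hB : B * -T = 1 := by
    have hBT : B * T = -1 := integral_exp_smul_mul hc hdecay
    rw [Matrix.mul_neg, hBT, neg_neg]
  calc ∫ z in Ioi (0 : ℝ), z ^ k * (u ⬝ᵥ (exp (z • T) *ᵥ ((-T) *ᵥ v)))
      = ∫ z in Ioi (0 : ℝ), u ⬝ᵥ ((z ^ k • exp (z • T)) *ᵥ ((-T) *ᵥ v)) := by
        simp only [smul_mulVec, dotProduct_smul, smul_eq_mul]
    _ = u ⬝ᵥ (((k ! : ℝ) • B ^ (k + 1)) *ᵥ ((-T) *ᵥ v)) := by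
        rw [integral_dotProduct_mulVec (integrableOn_pow_smul_exp_smul hc hdecay k),
          integral_pow_smul_exp_smul hc hdecay]
    _ = k ! * (u ⬝ᵥ ((-T)⁻¹ ^ k *ᵥ v)) := by
        rw [inv_eq_left_inv hB, smul_mulVec, mulVec_mulVec, pow_succ, mul_assoc, hB, mul_one,
          dotProduct_smul, smul_eq_mul]

end MatrixExp

theorem phaseType_moment_general {p : ℕ} (T : Matrix (Fin p) (Fin p) ℝ)
    (hT : ∀ μ ∈ spectrum ℂ (T.map (algebraMap ℝ ℂ)), μ.re < 0)
    (e : Fin p → ℝ) (t : Fin p → ℝ) (ht : t = (-T) *ᵥ e)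
    (π : Fin p → ℝ) :
    ∀ n : ℕ, 1 ≤ n →
      ∫ z in Set.Ioi (0 : ℝ), z ^ n * (π ⬝ᵥ (NormedSpace.exp (z • T) *ᵥ t)) =
        (n.factorial : ℝ) * (π ⬝ᵥ (((-T)⁻¹) ^ n *ᵥ e)) := by
  intro n _
  rw [ht]
  exact T.integral_pow_mul_dotProduct_exp_smul_mulVec hT π e n

/-- The `n`-th moment of a phase-type distribution `PH(π, T)` equals `n! π (-T)^{-n} e`. -/
theorem phaseType_moment {p : ℕ} (T : Matrix (Fin p) (Fin p) ℝ)
    (hT : ∀ μ ∈ spectrum ℂ (T.map (algebraMap ℝ ℂ)), μ.re < 0)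
    (e : Fin p → ℝ) (he : e = fun _ => 1) (t : Fin p → ℝ) (ht : t = (-T) *ᵥ e)
    (π : Fin p → ℝ) :
    ∀ n : ℕ, 1 ≤ n →
      ∫ z in Set.Ioi (0 : ℝ), z ^ n * (π ⬝ᵥ (NormedSpace.exp (z • T) *ᵥ t)) =
        (n.factorial : ℝ) * (π ⬝ᵥ (((-T)⁻¹) ^ n *ᵥ e)) :=
  phaseType_moment_general T hT e t ht π
end

section
/- Let T be a p×p real matrix every eigenvalue of which, viewed over ℂ, has strictly negative real part; let e be the all-ones vector in ℝ^p, t := −T e, and π ∈ ℝ^p. Then for every u ≥ 0, ∫₀^∞ e^{−uz} · (π·(exp(zT) t)) dz = π·((u·I − T)⁻¹ t). (The Laplace transform of a phase-type distribution PH(π, T) is 𝓛(u) = π (uI − T)^{−1} t.) -/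
/-!
With `A := T - u • 1`, the integrand is `π ⬝ᵥ (exp (z • A) *ᵥ t)`, and the eigenvalues of `A` are
those of `T` shifted by `-u ≤ 0`, so still in the open left half-plane. Since
`d/dz exp (z • A) *ᵥ w = exp (z • A) *ᵥ (A *ᵥ w)`, the fundamental theorem of calculus on `(0, ∞)`
gives `∫ exp (z • A) *ᵥ t = (-A)⁻¹ *ᵥ t`, once `exp (z • A) *ᵥ v` is known to be integrable and to
tend to `0`. For that, complexify and split `v` into generalized eigenvectors: on one with
eigenvalue `μ` the exponential series terminates, leaving a finite sum of `z ^ k * exp (z * μ)`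
times fixed vectors, each integrable and decaying because `μ.re < 0`.
-/

open Matrix MeasureTheory Set Filter Topology NormedSpace Nat

lemma norm_ofReal_pow_mul_cexp {μ : ℂ} {z : ℝ} (hz : 0 ≤ z) (k : ℕ) :
    ‖(z : ℂ) ^ k * Complex.exp (z * μ)‖ = z ^ (k : ℝ) * Real.exp (-(-μ.re) * z) := by
  rw [norm_mul, norm_pow, Complex.norm_exp, Complex.norm_real, Real.norm_of_nonneg hz,
    Real.rpow_natCast]
  simp [Complex.mul_re, mul_comm]

lemma integrableOn_ofReal_pow_mul_cexp_Ioi {μ : ℂ} (hμ : μ.re < 0) (k : ℕ) :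
    IntegrableOn (fun z : ℝ => (z : ℂ) ^ k * Complex.exp (z * μ)) (Ioi 0) := by
  have hbound := integrableOn_rpow_mul_exp_neg_mul_rpow (s := k) (p := 1) (b := -μ.re)
    (by linarith [k.cast_nonneg (α := ℝ)]) one_pos (neg_pos.mpr hμ)
  simp_rw [Real.rpow_one] at hbound
  refine hbound.mono' (by fun_prop : Continuous _).aestronglyMeasurable ?_
  filter_upwards [ae_restrict_mem measurableSet_Ioi] with z hz
  exact (norm_ofReal_pow_mul_cexp (le_of_lt hz) k).le

lemma tendsto_ofReal_pow_mul_cexp_atTop {μ : ℂ} (hμ : μ.re < 0) (k : ℕ) :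
    Tendsto (fun z : ℝ => (z : ℂ) ^ k * Complex.exp (z * μ)) atTop (𝓝 0) := by
  rw [tendsto_zero_iff_norm_tendsto_zero]
  refine (tendsto_rpow_mul_exp_neg_mul_atTop_nhds_zero k _ (neg_pos.mpr hμ)).congr' ?_
  filter_upwards [eventually_ge_atTop 0] with z hz
  exact (norm_ofReal_pow_mul_cexp hz k).symm

theorem Module.End.mem_spectrum_of_mem_maxGenEigenspace {R M : Type*} [CommRing R]
    [AddCommGroup M] [Module R M] {f : Module.End R M} {μ : R} {x : M}
    (hx : x ∈ f.maxGenEigenspace μ) (hx0 : x ≠ 0) : μ ∈ spectrum R f :=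
  HasUnifEigenvalue.mem_spectrum <|
    (hasUnifEigenvalue_iff_hasUnifEigenvalue_one WithTop.top_pos).mp
      (HasUnifEigenvector.hasUnifEigenvalue ⟨hx, hx0⟩)

namespace Matrix

variable {n : Type*} [Fintype n]

theorem integral_dotProduct {X : Type*} [MeasurableSpace X] {μ : Measure X} {f : X → n → ℝ}
    (hf : Integrable f μ) (x : n → ℝ) :
    ∫ a, x ⬝ᵥ f a ∂μ = x ⬝ᵥ ∫ a, f a ∂μ :=
  (dotProductBilin ℝ ℝ x).toContinuousLinearMap.integral_comp_comm hf

variable [DecidableEq n]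

open scoped Pointwise in
theorem spectrum_map_sub_smul_one (T : Matrix n n ℝ) (u : ℝ) :
    spectrum ℂ ((T - u • 1).map (algebraMap ℝ ℂ)) =
      spectrum ℂ (T.map (algebraMap ℝ ℂ)) - ({(u : ℂ)} : Set ℂ) := by
  rw [spectrum.sub_singleton_eq]
  congr 1
  ext i j
  by_cases hij : i = j <;> simp [algebraMap_matrix_apply, hij]

section
variable {𝕂 : Type*} [RCLike 𝕂]

theorem exp_add_smul_one (A : Matrix n n 𝕂) (c : 𝕂) : exp (A + c • 1) = exp c • exp A := by
  rw [exp_add_of_commute _ _ ((Commute.one_right A).smul_right c), smul_one_eq_diagonal,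
    exp_diagonal, Pi.exp_def, ← smul_one_eq_diagonal, mul_smul_one]

open scoped Norms.Operator in
theorem exp_mulVec_of_pow_mulVec_eq_zero (N : Matrix n n 𝕂) {v : n → 𝕂} {m : ℕ}
    (hv : N ^ m *ᵥ v = 0) :
    exp N *ᵥ v = ∑ k ∈ Finset.range m, (k ! : 𝕂)⁻¹ • (N ^ k *ᵥ v) := by
  let applyTo : Matrix n n 𝕂 →+ (n → 𝕂) := AddMonoidHom.mk' (· *ᵥ v) fun M M' => add_mulVec M M' v
  have hsum := (exp_series_hasSum_exp' (𝕂 := 𝕂) N).map applyTo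
    (continuous_id.matrix_mulVec continuous_const)
  have htrunc : HasSum _ (∑ k ∈ Finset.range m, (applyTo ∘ fun k => (k ! : 𝕂)⁻¹ • N ^ k) k) :=
    hasSum_sum_of_ne_finset_zero fun k hk => by
      have hmk : m ≤ k := by simpa using hk
      simp only [Function.comp_apply, applyTo, AddMonoidHom.mk'_apply, smul_mulVec]
      rw [← Nat.sub_add_cancel hmk, pow_add, ← mulVec_mulVec, hv, mulVec_zero, smul_zero]
  simp only [Function.comp_apply, applyTo, AddMonoidHom.mk'_apply, smul_mulVec] at hsum htrunc
  exact hsum.unique htrunc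

theorem exp_smul_mulVec_of_pow_sub_mulVec_eq_zero (B : Matrix n n 𝕂) {μ : 𝕂} {v : n → 𝕂}
    {m : ℕ} (hv : (B - μ • 1) ^ m *ᵥ v = 0) (z : 𝕂) :
    exp (z • B) *ᵥ v =
      ∑ k ∈ Finset.range m, (z ^ k * exp (z * μ)) • ((k ! : 𝕂)⁻¹ • ((B - μ • 1) ^ k *ᵥ v)) := by
  have hsplit : z • B = z • (B - μ • 1) + (z * μ) • 1 := by
    rw [smul_sub, smul_smul, sub_add_cancel]
  have hzv : (z • (B - μ • 1)) ^ m *ᵥ v = 0 := by rw [smul_pow, smul_mulVec, hv, smul_zero]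
  rw [hsplit, exp_add_smul_one, smul_mulVec, exp_mulVec_of_pow_mulVec_eq_zero _ hzv,
    Finset.smul_sum]
  refine Finset.sum_congr rfl fun k _ => ?_
  simp only [smul_pow, smul_mulVec, smul_smul]
  ring_nf

end

theorem integrableOn_and_tendsto_exp_smul_mulVec {B : Matrix n n ℂ}
    (hB : ∀ μ ∈ spectrum ℂ B, μ.re < 0) (v : n → ℂ) :
    IntegrableOn (fun z : ℝ => exp ((z : ℂ) • B) *ᵥ v) (Ioi 0) ∧
      Tendsto (fun z : ℝ => exp ((z : ℂ) • B) *ᵥ v) atTop (𝓝 0) := by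
  have hv : v ∈ ⨆ μ, Module.End.maxGenEigenspace (toLinAlgEquiv' B) μ := by
    rw [Module.End.iSup_maxGenEigenspace_eq_top]; trivial
  refine Submodule.iSup_induction (motive := fun v =>
      IntegrableOn (fun z : ℝ => exp ((z : ℂ) • B) *ᵥ v) (Ioi 0) ∧
        Tendsto (fun z : ℝ => exp ((z : ℂ) • B) *ᵥ v) atTop (𝓝 0))
    _ hv (fun μ w hw => ?_) (by simp) fun w w' hw hw' => ?_
  · rcases eq_or_ne w 0 with rfl | hw0
    · simp
    have hμ : μ.re < 0 := hB μ <| by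
      simpa using Module.End.mem_spectrum_of_mem_maxGenEigenspace hw hw0
    obtain ⟨m, hm⟩ := (Module.End.mem_maxGenEigenspace _ _ _).mp hw
    have hmat : (B - μ • 1) ^ m *ᵥ w = 0 := by
      rwa [← toLinAlgEquiv'_apply, map_pow, map_sub, map_smul, map_one]
    simp_rw [exp_smul_mulVec_of_pow_sub_mulVec_eq_zero B hmat, ← Complex.exp_eq_exp_ℂ]
    refine ⟨integrable_finsetSum _ fun k _ =>
      (integrableOn_ofReal_pow_mul_cexp_Ioi hμ k).smul_const _, ?_⟩
    simpa using tendsto_finsetSum (Finset.range m) fun k _ =>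
      (tendsto_ofReal_pow_mul_cexp_atTop hμ k).smul_const ((k ! : ℂ)⁻¹ • ((B - μ • 1) ^ k *ᵥ w))
  · simp only [mulVec_add]
    exact ⟨hw.1.add hw'.1, by simpa using hw.2.add hw'.2⟩

section
open scoped Norms.Operator

theorem map_exp_algebraMap (A : Matrix n n ℝ) :
    (exp A).map (algebraMap ℝ ℂ) = exp (A.map (algebraMap ℝ ℂ)) :=
  map_exp ((algebraMap ℝ ℂ).mapMatrix) (continuous_id.matrix_map (continuous_algebraMap ℝ ℂ)) A

theorem hasDerivAt_exp_smul_mulVec (A : Matrix n n ℝ) (w : n → ℝ) (z : ℝ) :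
    HasDerivAt (fun s : ℝ => exp (s • A) *ᵥ w) (exp (z • A) *ᵥ (A *ᵥ w)) z := by
  let applyTo : Matrix n n ℝ →L[ℝ] (n → ℝ) :=
    (LinearMap.applyₗ w ∘ₗ toLin'.toLinearMap).toContinuousLinearMap
  rw [mulVec_mulVec]
  exact applyTo.hasFDerivAt.comp_hasDerivAt z (hasDerivAt_exp_smul_const (𝕂 := ℝ) A z)

end

theorem integrableOn_and_tendsto_exp_smul_mulVec_real {A : Matrix n n ℝ}
    (hA : ∀ μ ∈ spectrum ℂ (A.map (algebraMap ℝ ℂ)), μ.re < 0) (y : n → ℝ) :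
    IntegrableOn (fun z : ℝ => exp (z • A) *ᵥ y) (Ioi 0) ∧
      Tendsto (fun z : ℝ => exp (z • A) *ᵥ y) atTop (𝓝 0) := by
  obtain ⟨hint, htend⟩ := integrableOn_and_tendsto_exp_smul_mulVec hA (algebraMap ℝ ℂ ∘ y)
  let re : (n → ℂ) →L[ℝ] (n → ℝ) :=
    ContinuousLinearMap.pi fun i => Complex.reCLM.comp (ContinuousLinearMap.proj i)
  have hre (z : ℝ) : re (exp ((z : ℂ) • A.map (algebraMap ℝ ℂ)) *ᵥ (algebraMap ℝ ℂ ∘ y)) =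
      exp (z • A) *ᵥ y := by
    have hsmul : (z : ℂ) • A.map (algebraMap ℝ ℂ) = (z • A).map (algebraMap ℝ ℂ) := by
      ext; simp
    ext i
    rw [hsmul, ← map_exp_algebraMap]
    simp only [re, ContinuousLinearMap.pi_apply, ContinuousLinearMap.comp_apply,
      ContinuousLinearMap.proj_apply, Complex.reCLM_apply, ← RingHom.map_mulVec]
    simp
  simp_rw [← hre]
  exact ⟨re.integrable_comp hint,
    by simpa only [Function.comp_def, map_zero] using (re.continuous.tendsto 0).comp htend⟩

theorem integral_exp_smul_mulVec {A : Matrix n n ℝ}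
    (hA : ∀ μ ∈ spectrum ℂ (A.map (algebraMap ℝ ℂ)), μ.re < 0) (y : n → ℝ) :
    ∫ z in Ioi (0 : ℝ), exp (z • A) *ᵥ y = (-A)⁻¹ *ᵥ y := by
  have hdet : IsUnit (-A).det := by
    have hunit : IsUnit ((-A).map (algebraMap ℝ ℂ)) := by
      rw [Matrix.map_neg _ (map_neg _)]
      exact (spectrum.isUnit_of_zero_notMem ℂ fun h => by simpa using hA 0 h).neg
    rw [isUnit_iff_isUnit_det, ← RingHom.mapMatrix_apply, ← RingHom.map_det] at hunit
    simpa using hunit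
  have hAw : -A *ᵥ ((-A)⁻¹ *ᵥ y) = y := by rw [mulVec_mulVec, mul_nonsing_inv _ hdet, one_mulVec]
  have hderiv (z : ℝ) (_ : z ∈ Ici 0) :
      HasDerivAt (fun s : ℝ => -(exp (s • A) *ᵥ ((-A)⁻¹ *ᵥ y))) (exp (z • A) *ᵥ y) z := by
    have h := (hasDerivAt_exp_smul_mulVec A ((-A)⁻¹ *ᵥ y) z).neg
    rwa [← mulVec_neg, ← neg_mulVec, hAw] at h
  simpa using integral_Ioi_of_hasDerivAt_of_tendsto' hderiv
    (integrableOn_and_tendsto_exp_smul_mulVec_real hA y).1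
    (integrableOn_and_tendsto_exp_smul_mulVec_real hA ((-A)⁻¹ *ᵥ y)).2.neg

end Matrix

theorem phaseType_laplace_general {p : ℕ} (T : Matrix (Fin p) (Fin p) ℝ)
    (hT : ∀ μ ∈ spectrum ℂ (T.map (algebraMap ℝ ℂ)), μ.re < 0)
    (t : Fin p → ℝ)
    (π : Fin p → ℝ) :
    ∀ u : ℝ, 0 ≤ u →
      ∫ z in Set.Ioi (0 : ℝ), Real.exp (-(u * z)) * (π ⬝ᵥ (NormedSpace.exp (z • T) *ᵥ t)) =
        π ⬝ᵥ ((u • (1 : Matrix (Fin p) (Fin p) ℝ) - T)⁻¹ *ᵥ t) := by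
  intro u hu
  have hA : ∀ μ ∈ spectrum ℂ ((T - u • 1).map (algebraMap ℝ ℂ)), μ.re < 0 := by
    rw [spectrum_map_sub_smul_one]
    rintro _ ⟨ν, hν, _, rfl, rfl⟩
    simp only [Complex.sub_re, Complex.ofReal_re]
    linarith [hT ν hν]
  have hintegrand (z : ℝ) : Real.exp (-(u * z)) * (π ⬝ᵥ (exp (z • T) *ᵥ t)) =
      π ⬝ᵥ (exp (z • (T - u • 1)) *ᵥ t) := by
    rw [smul_sub, smul_smul, sub_eq_add_neg, ← neg_smul, exp_add_smul_one, smul_mulVec,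
      dotProduct_smul, ← Real.exp_eq_exp_ℝ, smul_eq_mul, mul_comm z u]
  simp_rw [hintegrand]
  rw [integral_dotProduct (integrableOn_and_tendsto_exp_smul_mulVec_real hA t).1,
    integral_exp_smul_mulVec hA, neg_sub]

/-- The Laplace transform of a phase-type distribution `PH(π, T)` is
`𝓛(u) = π (uI - T)⁻¹ t` for every `u ≥ 0`. -/
theorem phaseType_laplace {p : ℕ} (T : Matrix (Fin p) (Fin p) ℝ)
    (hT : ∀ μ ∈ spectrum ℂ (T.map (algebraMap ℝ ℂ)), μ.re < 0)
    (e : Fin p → ℝ) (he : e = fun _ => 1) (t : Fin p → ℝ) (ht : t = (-T) *ᵥ e)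
    (π : Fin p → ℝ) :
    ∀ u : ℝ, 0 ≤ u →
      ∫ z in Set.Ioi (0 : ℝ), Real.exp (-(u * z)) * (π ⬝ᵥ (NormedSpace.exp (z • T) *ᵥ t)) =
        π ⬝ᵥ ((u • (1 : Matrix (Fin p) (Fin p) ℝ) - T)⁻¹ *ᵥ t) :=
  phaseType_laplace_general T hT t π
end

section
/- Let ν be a probability measure on ℝ supported on [0,∞) (i.e., ν((−∞,0)) = 0) such that the identity function z ↦ z is ν-integrable. Then the function u ↦ (∫ z e^{−uz} dν(z)) / (∫ e^{−uz} dν(z)) is antitone on [0,∞): for all 0 ≤ u₁ ≤ u₂, the value at u₂ is at most the value at u₁. (In the frailty model this says E(Z | Y > y) is decreasing in y and attains its maximum E(Z) at y = 0.) -/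
open MeasureTheory

lemma frailty_pointwise_key (u₁ u₂ z w : ℝ) (h : u₁ ≤ u₂) :
    z * Real.exp (-(u₂ * z)) * Real.exp (-(u₁ * w)) +
      w * Real.exp (-(u₂ * w)) * Real.exp (-(u₁ * z)) ≤
    z * Real.exp (-(u₁ * z)) * Real.exp (-(u₂ * w)) +
      w * Real.exp (-(u₁ * w)) * Real.exp (-(u₂ * z)) := by
  have key : 0 ≤ (z - w) *
      (Real.exp (-(u₁ * z)) * Real.exp (-(u₂ * w)) -
        Real.exp (-(u₂ * z)) * Real.exp (-(u₁ * w))) := by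
    rcases le_total w z with hzw | hzw
    · apply mul_nonneg (by linarith)
      have : -(u₂ * z) + -(u₁ * w) ≤ -(u₁ * z) + -(u₂ * w) := by nlinarith
      rw [sub_nonneg, ← Real.exp_add, ← Real.exp_add]
      exact Real.exp_le_exp.mpr this
    · have h2 : Real.exp (-(u₁ * z)) * Real.exp (-(u₂ * w)) -
          Real.exp (-(u₂ * z)) * Real.exp (-(u₁ * w)) ≤ 0 := by
        have : -(u₁ * z) + -(u₂ * w) ≤ -(u₂ * z) + -(u₁ * w) := by nlinarith
        rw [sub_nonpos, ← Real.exp_add, ← Real.exp_add]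
        exact Real.exp_le_exp.mpr this
      nlinarith [h2]
  nlinarith [key]

/-- For a frailty `Z` with law `ν` supported on `[0, ∞)` and integrable identity,
the map `u ↦ (∫ z e^{-uz} dν) / (∫ e^{-uz} dν)` is antitone on `[0, ∞)`: in the frailty
model, `E(Z | Y > y)` is decreasing and attains its maximum `E(Z)` at `y = 0`. -/
theorem frailty_conditional_mean_antitone (ν : Measure ℝ) [IsProbabilityMeasure ν]
    (hsupp : ν (Set.Iio 0) = 0) (hint : Integrable (fun z : ℝ => z) ν) :
    ∀ u₁ u₂ : ℝ, 0 ≤ u₁ → u₁ ≤ u₂ →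
      (∫ z, z * Real.exp (-(u₂ * z)) ∂ν) / (∫ z, Real.exp (-(u₂ * z)) ∂ν) ≤
        (∫ z, z * Real.exp (-(u₁ * z)) ∂ν) / (∫ z, Real.exp (-(u₁ * z)) ∂ν) := by
  intro u₁ u₂ hu₁ h12
  have hu₂ : (0:ℝ) ≤ u₂ := hu₁.trans h12
  have hae : ∀ᵐ z ∂ν, 0 ≤ z := by
    rw [ae_iff]
    convert hsupp using 2
    ext z
    simp [not_le]
  have hbound : ∀ u : ℝ, 0 ≤ u → ∀ z : ℝ, 0 ≤ z → Real.exp (-(u * z)) ≤ 1 := by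
    intro u hu z hz
    calc Real.exp (-(u * z)) ≤ Real.exp 0 :=
          Real.exp_le_exp.mpr (by nlinarith)
      _ = 1 := Real.exp_zero
  have hexp : ∀ u : ℝ, 0 ≤ u → Integrable (fun z => Real.exp (-(u * z))) ν := by
    intro u hu
    refine Integrable.mono' (integrable_const 1) ?_ ?_
    · exact (Real.measurable_exp.comp
        (measurable_const.mul measurable_id).neg).aestronglyMeasurable
    · filter_upwards [hae] with z hz
      rw [Real.norm_eq_abs, abs_of_pos (Real.exp_pos _)]
      exact hbound u hu z hz
  have hzexp : ∀ u : ℝ, 0 ≤ u → Integrable (fun z => z * Real.exp (-(u * z))) ν := by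
    intro u hu
    refine Integrable.mono' hint.abs ?_ ?_
    · exact (measurable_id.mul (Real.measurable_exp.comp
        (measurable_const.mul measurable_id).neg)).aestronglyMeasurable
    · filter_upwards [hae] with z hz
      rw [Real.norm_eq_abs, abs_mul, abs_of_pos (Real.exp_pos _)]
      calc |z| * Real.exp (-(u * z)) ≤ |z| * 1 := by
            exact mul_le_mul_of_nonneg_left (hbound u hu z hz) (abs_nonneg z)
        _ = |z| := mul_one _
  have hpos : ∀ u : ℝ, 0 ≤ u → 0 < ∫ z, Real.exp (-(u * z)) ∂ν := by
    intro u hu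
    refine (integral_pos_iff_support_of_nonneg
      (fun z => (Real.exp_pos _).le) (hexp u hu)).mpr ?_
    have : (Function.support fun z : ℝ => Real.exp (-(u * z))) = Set.univ := by
      ext z; simp [Function.support, Real.exp_ne_zero]
    rw [this]
    simp
  rw [div_le_div_iff₀ (hpos u₂ hu₂) (hpos u₁ hu₁)]
  -- reduce to a product-measure inequality
  have hF : Integrable (fun p : ℝ × ℝ =>
      p.1 * Real.exp (-(u₂ * p.1)) * Real.exp (-(u₁ * p.2))) (ν.prod ν) :=
    (hzexp u₂ hu₂).mul_prod (hexp u₁ hu₁)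
  have hG : Integrable (fun p : ℝ × ℝ =>
      p.1 * Real.exp (-(u₁ * p.1)) * Real.exp (-(u₂ * p.2))) (ν.prod ν) :=
    (hzexp u₁ hu₁).mul_prod (hexp u₂ hu₂)
  have hFs : Integrable (fun p : ℝ × ℝ =>
      p.2 * Real.exp (-(u₂ * p.2)) * Real.exp (-(u₁ * p.1))) (ν.prod ν) := by
    have := ((hexp u₁ hu₁).mul_prod (hzexp u₂ hu₂))
    simpa [mul_comm] using this
  have hGs : Integrable (fun p : ℝ × ℝ =>
      p.2 * Real.exp (-(u₁ * p.2)) * Real.exp (-(u₂ * p.1))) (ν.prod ν) := by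
    have := ((hexp u₂ hu₂).mul_prod (hzexp u₁ hu₁))
    simpa [mul_comm] using this
  have hFeq : (∫ z, z * Real.exp (-(u₂ * z)) ∂ν) * (∫ z, Real.exp (-(u₁ * z)) ∂ν)
      = ∫ p : ℝ × ℝ, p.1 * Real.exp (-(u₂ * p.1)) * Real.exp (-(u₁ * p.2)) ∂(ν.prod ν) :=
    (integral_prod_mul _ _).symm
  have hGeq : (∫ z, z * Real.exp (-(u₁ * z)) ∂ν) * (∫ z, Real.exp (-(u₂ * z)) ∂ν)
      = ∫ p : ℝ × ℝ, p.1 * Real.exp (-(u₁ * p.1)) * Real.exp (-(u₂ * p.2)) ∂(ν.prod ν) :=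
    (integral_prod_mul _ _).symm
  -- swap identities
  have hFswap : ∫ p : ℝ × ℝ, p.1 * Real.exp (-(u₂ * p.1)) * Real.exp (-(u₁ * p.2)) ∂(ν.prod ν)
      = ∫ p : ℝ × ℝ, p.2 * Real.exp (-(u₂ * p.2)) * Real.exp (-(u₁ * p.1)) ∂(ν.prod ν) :=
    (integral_prod_swap (fun p : ℝ × ℝ =>
      p.1 * Real.exp (-(u₂ * p.1)) * Real.exp (-(u₁ * p.2)))).symm
  have hGswap : ∫ p : ℝ × ℝ, p.1 * Real.exp (-(u₁ * p.1)) * Real.exp (-(u₂ * p.2)) ∂(ν.prod ν)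
      = ∫ p : ℝ × ℝ, p.2 * Real.exp (-(u₁ * p.2)) * Real.exp (-(u₂ * p.1)) ∂(ν.prod ν) :=
    (integral_prod_swap (fun p : ℝ × ℝ =>
      p.1 * Real.exp (-(u₁ * p.1)) * Real.exp (-(u₂ * p.2)))).symm
  rw [hFeq, hGeq]
  have hsum : ∫ p : ℝ × ℝ, (p.1 * Real.exp (-(u₂ * p.1)) * Real.exp (-(u₁ * p.2)) +
        p.2 * Real.exp (-(u₂ * p.2)) * Real.exp (-(u₁ * p.1))) ∂(ν.prod ν) ≤
      ∫ p : ℝ × ℝ, (p.1 * Real.exp (-(u₁ * p.1)) * Real.exp (-(u₂ * p.2)) +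
        p.2 * Real.exp (-(u₁ * p.2)) * Real.exp (-(u₂ * p.1))) ∂(ν.prod ν) := by
    refine integral_mono (hF.add hFs) (hG.add hGs) ?_
    intro p
    exact frailty_pointwise_key u₁ u₂ p.1 p.2 h12
  rw [integral_add hF hFs, integral_add hG hGs] at hsum
  rw [← hFswap, ← hGswap] at hsum
  linarith
end

section
/- Let T be a p×p real matrix, e the all-ones vector in ℝ^p, t := −T e, and π ∈ ℝ^p. Let c, m ∈ ℝ with c·I − T and m·I − T invertible, and suppose d := π·((c·I − T)⁻¹ t) ≠ 0. Define the row vector π̃ := (1/d) · π (c·I − T)⁻¹ (−T) and the matrix T̃ := T − c·I. Then: (a) π̃·e = 1; and (b) π·((m·I − T)⁻¹ t) / d = π̃·(((m − c)·I − T̃)⁻¹ ((−T̃) e)). (In the frailty model with cumulative hazard M, taking c = M(s) and m = M(y + s), this says that the conditional distribution of the remaining survival time given survival past time s is again a phase-type frailty model, with initial vector π̃, sub-intensity matrix T̃ = T − M(s)I, and baseline hazard μ̃(y) = μ(y + s).) -/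
open Matrix MeasureTheory

/-!
Both `T̃ = -(cI - T)` and `(m - c)I - T̃ = mI - T` are polynomials in `T`, so all matrices involved
commute, and the factor `(cI - T)⁻¹` in `π̃` cancels against `-T̃ e = (cI - T) e`. Part (a) is the
definition of `d`, since `-T e = t`.
-/

section Commute

variable {R A : Type*} [CommSemiring R] [Ring A] [Algebra R A]

theorem commute_smul_one_sub_self (T : A) (a : R) : Commute T (a • 1 - T) :=
  ((Commute.one_right T).smul_right a).sub_right (Commute.refl T)

theorem commute_smul_one_sub_smul_one_sub (T : A) (a b : R) :
    Commute (a • 1 - T) (b • 1 - T) :=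
  ((Commute.one_left _).smul_left a).sub_left (commute_smul_one_sub_self T b)

end Commute

namespace Matrix

variable {n R : Type*} [Fintype n] [DecidableEq n] [CommRing R]

theorem commute_nonsing_inv_right {M B : Matrix n n R} (h : Commute M B) : Commute M B⁻¹ := by
  simpa using Matrix.Commute.zpow_right h (-1)

theorem nonsing_inv_mul_mul_nonsing_inv_mul {A B N : Matrix n n R} (hA : IsUnit A)
    (hAN : Commute A N) (hAB : Commute A B) (hNB : Commute N B) :
    A⁻¹ * N * B⁻¹ * A = B⁻¹ * N := by
  have hA' : IsUnit A.det := (isUnit_iff_isUnit_det A).mp hA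
  calc A⁻¹ * N * B⁻¹ * A = A⁻¹ * (A * (N * B⁻¹)) := by
        rw [(hAN.mul_right (commute_nonsing_inv_right hAB)).eq]; simp only [Matrix.mul_assoc]
    _ = B⁻¹ * N := by rw [nonsing_inv_mul_cancel_left A _ hA', (commute_nonsing_inv_right hNB).eq]

end Matrix

theorem phaseTypeFrailty_residual_general {p : ℕ} (T : Matrix (Fin p) (Fin p) ℝ)
    (e : Fin p → ℝ) (t : Fin p → ℝ) (ht : t = (-T) *ᵥ e)
    (π : Fin p → ℝ) (c m : ℝ)
    (hc : IsUnit (c • (1 : Matrix (Fin p) (Fin p) ℝ) - T))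
    (d : ℝ) (hd : d = π ⬝ᵥ ((c • (1 : Matrix (Fin p) (Fin p) ℝ) - T)⁻¹ *ᵥ t))
    (hdne : d ≠ 0)
    (πt : Fin p → ℝ)
    (hπt : πt = (1 / d) • ((π ᵥ* (c • (1 : Matrix (Fin p) (Fin p) ℝ) - T)⁻¹) ᵥ* (-T)))
    (Tt : Matrix (Fin p) (Fin p) ℝ) (hTt : Tt = T - c • (1 : Matrix (Fin p) (Fin p) ℝ)) :
    πt ⬝ᵥ e = 1 ∧
    (π ⬝ᵥ ((m • (1 : Matrix (Fin p) (Fin p) ℝ) - T)⁻¹ *ᵥ t)) / d =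
      πt ⬝ᵥ (((m - c) • (1 : Matrix (Fin p) (Fin p) ℝ) - Tt)⁻¹ *ᵥ ((-Tt) *ᵥ e)) := by
  have hshift : (m - c) • (1 : Matrix (Fin p) (Fin p) ℝ) - Tt = m • 1 - T := by
    rw [hTt, sub_smul]; abel
  have hneg : -Tt = c • 1 - T := by rw [hTt]; abel
  have hcancel := nonsing_inv_mul_mul_nonsing_inv_mul hc
    (commute_smul_one_sub_self T c).symm.neg_right (commute_smul_one_sub_smul_one_sub T c m)
    (commute_smul_one_sub_self T m).neg_left
  rw [hπt, hshift, hneg, smul_dotProduct, smul_dotProduct, ← dotProduct_mulVec,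
    ← dotProduct_mulVec, ← dotProduct_mulVec, ← dotProduct_mulVec]
  constructor
  · rw [← ht, ← hd, smul_eq_mul, one_div_mul_cancel hdne]
  · rw [mulVec_mulVec, mulVec_mulVec, mulVec_mulVec, hcancel, ← mulVec_mulVec, ← ht,
      smul_eq_mul, one_div, inv_mul_eq_div]

/-- The conditional distribution of the remaining survival time in a phase-type frailty
model is again a phase-type frailty model: with `d = π (cI - T)⁻¹ t ≠ 0`,
`π̃ = (1/d) π (cI - T)⁻¹ (-T)` and `T̃ = T - cI`, one has `π̃ e = 1` and
`π ((mI - T)⁻¹ t) / d = π̃ (((m - c)I - T̃)⁻¹ (-T̃) e)`. -/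
theorem phaseTypeFrailty_residual {p : ℕ} (T : Matrix (Fin p) (Fin p) ℝ)
    (e : Fin p → ℝ) (he : e = fun _ => 1) (t : Fin p → ℝ) (ht : t = (-T) *ᵥ e)
    (π : Fin p → ℝ) (c m : ℝ)
    (hc : IsUnit (c • (1 : Matrix (Fin p) (Fin p) ℝ) - T))
    (hm : IsUnit (m • (1 : Matrix (Fin p) (Fin p) ℝ) - T))
    (d : ℝ) (hd : d = π ⬝ᵥ ((c • (1 : Matrix (Fin p) (Fin p) ℝ) - T)⁻¹ *ᵥ t))
    (hdne : d ≠ 0)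
    (πt : Fin p → ℝ)
    (hπt : πt = (1 / d) • ((π ᵥ* (c • (1 : Matrix (Fin p) (Fin p) ℝ) - T)⁻¹) ᵥ* (-T)))
    (Tt : Matrix (Fin p) (Fin p) ℝ) (hTt : Tt = T - c • (1 : Matrix (Fin p) (Fin p) ℝ)) :
    πt ⬝ᵥ e = 1 ∧
    (π ⬝ᵥ ((m • (1 : Matrix (Fin p) (Fin p) ℝ) - T)⁻¹ *ᵥ t)) / d =
      πt ⬝ᵥ (((m - c) • (1 : Matrix (Fin p) (Fin p) ℝ) - Tt)⁻¹ *ᵥ ((-Tt) *ᵥ e)) :=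
  phaseTypeFrailty_residual_general T e t ht π c m hc d hd hdne πt hπt Tt hTt
end

section
/- Let T be a p×p real matrix every eigenvalue of which, viewed over ℂ, has strictly negative real part; let e be the all-ones vector in ℝ^p, t := −T e, and π ∈ ℝ^p. Define 𝓛(u) := π·((u·I − T)⁻¹ t) for u ≥ 0, and suppose 𝓛(u) > 0 for all u ≥ 0. Then there exist an integer k with 1 ≤ k ≤ p and a constant C > 0 such that u^k · 𝓛(u) → C as u → ∞. (That is, the phase-type Laplace transform satisfies 𝓛(u) ~ C u^{−k} as u → ∞ for some integer k between 1 and p.) -/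
open Matrix MeasureTheory Filter Polynomial

lemma adjugate_charmatrix_natDegree_le {p : ℕ} (T : Matrix (Fin p) (Fin p) ℝ) (i j : Fin p) :
    (adjugate (charmatrix T) i j).natDegree ≤ p - 1 := by
  rw [adjugate_apply, det_apply']
  apply Polynomial.natDegree_sum_le_of_forall_le
  intro σ _
  refine (Polynomial.natDegree_mul_le).trans ?_
  have h1 : (Polynomial.natDegree (R := ℝ) (((Equiv.Perm.sign σ : ℤ) : ℝ[X]))) = 0 :=
    Polynomial.natDegree_intCast _
  rw [h1, zero_add]
  refine (Polynomial.natDegree_prod_le _ _).trans ?_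
  have hbound : ∀ k : Fin p,
      (((charmatrix T).updateRow j (Pi.single i 1)) (σ k) k).natDegree ≤
        if σ k = j then 0 else 1 := by
    intro k
    by_cases h : σ k = j
    · simp only [h, if_pos, updateRow_apply, if_pos rfl]
      by_cases hk : k = i <;> simp [Pi.single_apply, hk]
    · rw [updateRow_apply, if_neg h, if_neg h]
      exact (charmatrix_apply_natDegree_le _ _).trans (by split <;> omega)
  refine (Finset.sum_le_sum fun k _ => hbound k).trans ?_
  have ha : ∀ x ∈ Finset.univ.erase (σ.symm j),
      (if σ x = j then 0 else 1) = 1 := by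
    intro x hx
    rw [if_neg]
    intro hc
    exact Finset.ne_of_mem_erase hx (by simp [← hc])
  rw [← Finset.sum_erase_add _ _ (Finset.mem_univ (σ.symm j)),
    Finset.sum_congr rfl ha]
  simp [Finset.card_erase_of_mem]

/-- Tail behavior of the phase-type Laplace transform: if all complex eigenvalues of `T`
have strictly negative real part and `𝓛(u) = π (uI - T)⁻¹ t > 0` for all `u ≥ 0`, then
there exist an integer `1 ≤ k ≤ p` and a constant `C > 0` with `u^k 𝓛(u) → C` as
`u → ∞`, i.e., `𝓛(u) ~ C u^{-k}`. -/
theorem phaseType_laplace_asymptotics {p : ℕ} (T : Matrix (Fin p) (Fin p) ℝ)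
    (hT : ∀ μ ∈ spectrum ℂ (T.map (algebraMap ℝ ℂ)), μ.re < 0)
    (e : Fin p → ℝ) (he : e = fun _ => 1) (t : Fin p → ℝ) (ht : t = (-T) *ᵥ e)
    (π : Fin p → ℝ)
    (hpos : ∀ u : ℝ, 0 ≤ u →
      0 < π ⬝ᵥ ((u • (1 : Matrix (Fin p) (Fin p) ℝ) - T)⁻¹ *ᵥ t)) :
    ∃ (k : ℕ) (C : ℝ), 1 ≤ k ∧ k ≤ p ∧ 0 < C ∧
      Tendsto (fun u : ℝ =>
          u ^ k * (π ⬝ᵥ ((u • (1 : Matrix (Fin p) (Fin p) ℝ) - T)⁻¹ *ᵥ t)))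
        atTop (nhds C) := by
  -- p > 0
  rcases Nat.eq_zero_or_pos p with hp | hp
  · exfalso
    have h0 := hpos 0 le_rfl
    subst hp
    simp [dotProduct] at h0
  -- The charmatrix evaluated at u is u • 1 - T
  have hmap : ∀ u : ℝ, (charmatrix T).map (Polynomial.eval u) =
      u • (1 : Matrix (Fin p) (Fin p) ℝ) - T := by
    intro u
    ext i j
    by_cases h : i = j <;>
      simp [charmatrix_apply, Matrix.map_apply, Matrix.one_apply, diagonal_apply, h]
  -- The numerator polynomial
  set N : ℝ[X] :=
    (fun i => Polynomial.C (π i)) ⬝ᵥ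
      (adjugate (charmatrix T) *ᵥ fun j => Polynomial.C (t j)) with hN
  set Q : ℝ[X] := T.charpoly with hQ
  have hNeval : ∀ u : ℝ, N.eval u = π ⬝ᵥ (adjugate (u • (1 : Matrix (Fin p) (Fin p) ℝ) - T) *ᵥ t) := by
    intro u
    have := RingHom.map_dotProduct (Polynomial.evalRingHom u)
      (fun i => Polynomial.C (π i))
      ((adjugate (charmatrix T)) *ᵥ fun j => Polynomial.C (t j))
    rw [hN]
    rw [show N.eval u = (Polynomial.evalRingHom u) N from rfl] at *
    rw [this]
    congr 1
    · ext i; simp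
    · funext i
      rw [Function.comp_apply, RingHom.map_mulVec]
      have hadj : (adjugate (charmatrix T)).map (Polynomial.evalRingHom u) =
          adjugate (u • (1 : Matrix (Fin p) (Fin p) ℝ) - T) := by
        have := (Polynomial.evalRingHom u).map_adjugate (charmatrix T)
        simp only [RingHom.mapMatrix_apply] at this
        rw [this]
        congr 1
        rw [show (charmatrix T).map (Polynomial.evalRingHom u)
            = (charmatrix T).map (Polynomial.eval u) from rfl, hmap]
      rw [hadj]
      congr 1
      funext j; simp
  have hQeval : ∀ u : ℝ, Q.eval u = (u • (1 : Matrix (Fin p) (Fin p) ℝ) - T).det := by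
    intro u
    rw [hQ, Matrix.charpoly,
      show (charmatrix T).det.eval u = (Polynomial.evalRingHom u) (charmatrix T).det from rfl,
      RingHom.map_det]
    congr 1
    rw [show (Polynomial.evalRingHom u).mapMatrix (charmatrix T)
        = (charmatrix T).map (Polynomial.eval u) from rfl, hmap]
  -- The Laplace transform as a rational function
  have hL : ∀ u : ℝ,
      π ⬝ᵥ ((u • (1 : Matrix (Fin p) (Fin p) ℝ) - T)⁻¹ *ᵥ t) = N.eval u / Q.eval u := by
    intro u
    rw [hNeval, hQeval, Matrix.inv_def, Ring.inverse_eq_inv, smul_mulVec,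
      dotProduct_smul, smul_eq_mul, div_eq_inv_mul]
  -- N is nonzero
  have hN0 : N ≠ 0 := by
    intro h
    have h0 := hpos 0 le_rfl
    rw [hL 0, h] at h0
    simp at h0
  -- degree of N is at most p - 1
  have hNdeg : N.natDegree ≤ p - 1 := by
    rw [hN]
    unfold dotProduct
    apply Polynomial.natDegree_sum_le_of_forall_le
    intro i _
    refine Polynomial.natDegree_mul_le.trans ?_
    rw [Polynomial.natDegree_C, zero_add]
    unfold Matrix.mulVec dotProduct
    apply Polynomial.natDegree_sum_le_of_forall_le
    intro j _
    refine Polynomial.natDegree_mul_le.trans ?_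
    rw [Polynomial.natDegree_C, add_zero]
    exact adjugate_charmatrix_natDegree_le T i j
  set k : ℕ := p - N.natDegree with hk
  have hk1 : 1 ≤ k := by omega
  have hkp : k ≤ p := by omega
  set P : ℝ[X] := X ^ k * N with hP
  have hP0 : P ≠ 0 := mul_ne_zero (pow_ne_zero _ X_ne_zero) hN0
  have hPnat : P.natDegree = p := by
    rw [hP, Polynomial.natDegree_mul (pow_ne_zero _ X_ne_zero) hN0,
      Polynomial.natDegree_X_pow]
    omega
  have hQdeg : Q.degree = (p : ℕ) := by
    rw [hQ]
    have := Matrix.charpoly_degree_eq_dim T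
    rwa [Fintype.card_fin] at this
  have hPdeg : P.degree = Q.degree := by
    rw [Polynomial.degree_eq_natDegree hP0, hPnat, hQdeg]
  have htend := Polynomial.div_tendsto_leadingCoeff_div_of_degree_eq P Q hPdeg
  have hlc : P.leadingCoeff / Q.leadingCoeff = N.leadingCoeff := by
    rw [hP, Polynomial.leadingCoeff_mul, Polynomial.leadingCoeff_X_pow, one_mul,
      (Matrix.charpoly_monic T).leadingCoeff, div_one]
  rw [hlc] at htend
  have hfun : (fun u : ℝ =>
      u ^ k * (π ⬝ᵥ ((u • (1 : Matrix (Fin p) (Fin p) ℝ) - T)⁻¹ *ᵥ t))) =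
      fun u : ℝ => P.eval u / Q.eval u := by
    funext u
    rw [hL u, hP, Polynomial.eval_mul, Polynomial.eval_pow, Polynomial.eval_X,
      mul_div_assoc]
  have htend' : Tendsto (fun u : ℝ =>
      u ^ k * (π ⬝ᵥ ((u • (1 : Matrix (Fin p) (Fin p) ℝ) - T)⁻¹ *ᵥ t)))
      atTop (nhds N.leadingCoeff) := by
    rw [hfun]; exact htend
  have hCnonneg : 0 ≤ N.leadingCoeff := by
    refine ge_of_tendsto htend' ?_
    filter_upwards [eventually_ge_atTop (0 : ℝ)] with u hu
    exact mul_nonneg (pow_nonneg hu k) (hpos u hu).le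
  have hCne : N.leadingCoeff ≠ 0 := Polynomial.leadingCoeff_ne_zero.mpr hN0
  exact ⟨k, N.leadingCoeff, hk1, hkp, lt_of_le_of_ne hCnonneg (Ne.symm hCne), htend'⟩
end

section
/- Let T be a p×p real matrix every eigenvalue of which, viewed over ℂ, has strictly negative real part. Then T is invertible, the matrix-valued function z ↦ exp(zT) is (entrywise) integrable on (0,∞), and ∫₀^∞ exp(zT) dz = (−T)⁻¹ (entrywise Bochner integral). -/
/-!
Write `A` for `T` viewed as a complex matrix. The matrix algebra is spanned by generalized
eigenvectors of left multiplication by `A`, so it suffices to show that `z ↦ exp (z A) B` is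
integrable on `(0, ∞)` when `(A - μ)ᵏ B = 0`. Then
`exp (z A) B = e^{z μ} ∑_{j < k} zʲ / j! (A - μ)ʲ B`, and `Re μ < 0` because `μ` lies in the
spectrum of `A` unless `B = 0`. Taking real parts, `z ↦ exp (z T)` is integrable. Its derivative
`T exp (z T)` is then integrable too, so `exp (z T) → 0` and the fundamental theorem of calculus
gives `T ∫₀^∞ exp (z T) dz = -1`, which yields both the invertibility of `T` and the formula.
-/

open Matrix MeasureTheory NormedSpace Set Finset
open scoped Nat

theorem spectrum.mem_of_pow_sub_mul_eq_zero {𝕜 A : Type*} [CommRing 𝕜] [Ring A] [Algebra 𝕜 A]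
    {a b : A} {μ : 𝕜} {k : ℕ} (h : (a - algebraMap 𝕜 A μ) ^ k * b = 0) (hb : b ≠ 0) :
    μ ∈ spectrum 𝕜 a := by
  intro hunit
  have hunit' := hunit.neg
  rw [neg_sub] at hunit'
  exact hb ((hunit'.pow k).mul_right_eq_zero.mp h)

section ExpSeries

variable {𝕂 𝔸 : Type*} [RCLike 𝕂] [NormedRing 𝔸] [NormedAlgebra 𝕂 𝔸] [CompleteSpace 𝔸]

variable (𝕂) in
theorem NormedSpace.exp_mul_eq_sum_of_pow_mul_eq_zero {x b : 𝔸} {m : ℕ} (h : x ^ m * b = 0) :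
    exp x * b = ∑ k ∈ range m, (k !⁻¹ : 𝕂) • (x ^ k * b) := by
  have hsum := (exp_series_hasSum_exp' (𝕂 := 𝕂) x).mul_right b
  simp_rw [smul_mul_assoc] at hsum
  refine hsum.unique (hasSum_sum_of_ne_finset_zero fun k hk => ?_)
  rw [← Nat.sub_add_cancel (not_lt.mp (mem_range.not.mp hk)), pow_add, mul_assoc, h, mul_zero,
    smul_zero]

theorem NormedSpace.exp_smul_mul_eq_sum_of_pow_sub_mul_eq_zero {a b : 𝔸} {c : 𝕂} {m : ℕ}
    (h : (a - algebraMap 𝕂 𝔸 c) ^ m * b = 0) (t : 𝕂) :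
    exp (t • a) * b =
      ∑ k ∈ range m, (exp (t * c) * t ^ k / k !) • ((a - algebraMap 𝕂 𝔸 c) ^ k * b) := by
  -- `exp_add_of_commute` is stated for `ℚ`-algebras
  let _ := NormedAlgebra.restrictScalars ℚ 𝕂 𝔸
  have hsplit : t • a = algebraMap 𝕂 𝔸 (t * c) + t • (a - algebraMap 𝕂 𝔸 c) := by
    rw [map_mul, ← Algebra.smul_def, ← smul_add, add_sub_cancel]
  have hpow : (t • (a - algebraMap 𝕂 𝔸 c)) ^ m * b = 0 := by
    rw [smul_pow, smul_mul_assoc, h, smul_zero]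
  rw [hsplit, exp_add_of_commute (Algebra.commutes _ _), ← algebraMap_exp_comm, mul_assoc,
    exp_mul_eq_sum_of_pow_mul_eq_zero 𝕂 hpow, Algebra.algebraMap_eq_smul_one, smul_one_mul,
    Finset.smul_sum]
  refine Finset.sum_congr rfl fun k _ => ?_
  rw [smul_pow, smul_mul_assoc, smul_smul, smul_smul]
  ring_nf

end ExpSeries

theorem integrableOn_Ioi_cexp_mul_mul_pow {μ : ℂ} (hμ : μ.re < 0) (k : ℕ) :
    IntegrableOn (fun z : ℝ => Complex.exp (z * μ) * (z : ℂ) ^ k) (Ioi 0) := by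
  have hreal : IntegrableOn (fun z : ℝ => z ^ k * Real.exp (μ.re * z)) (Ioi 0) := by
    refine (integrableOn_rpow_mul_exp_neg_mul_rpow (s := k) (p := 1) (b := -μ.re)
      (by linarith [(Nat.cast_nonneg k : (0 : ℝ) ≤ k)]) one_pos (by linarith)).congr_fun
      (fun z _ => ?_) measurableSet_Ioi
    simp
  refine hreal.mono' (by fun_prop) ((ae_restrict_iff' measurableSet_Ioi).mpr
    (Filter.Eventually.of_forall fun z hz => ?_))
  rw [norm_mul, Complex.norm_exp, norm_pow, Complex.norm_real, Real.norm_of_nonneg (le_of_lt hz)]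
  simp [mul_comm]

section ComplexAlgebra

variable {𝔸 : Type*} [NormedRing 𝔸] [NormedAlgebra ℂ 𝔸] [CompleteSpace 𝔸]

theorem integrableOn_Ioi_exp_smul_mul_of_pow_sub_mul_eq_zero {a b : 𝔸} {μ : ℂ} {k : ℕ}
    (hμ : μ.re < 0) (h : (a - algebraMap ℂ 𝔸 μ) ^ k * b = 0) :
    IntegrableOn (fun z : ℝ => exp ((z : ℂ) • a) * b) (Ioi 0) := by
  simp_rw [exp_smul_mul_eq_sum_of_pow_sub_mul_eq_zero h, ← Complex.exp_eq_exp_ℂ]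
  refine integrable_finsetSum _ fun j _ => Integrable.smul_const ?_ _
  simpa [mul_div_assoc] using (integrableOn_Ioi_cexp_mul_mul_pow hμ j).div_const (j ! : ℂ)

theorem integrableOn_Ioi_exp_smul_of_spectrum_re_neg [FiniteDimensional ℂ 𝔸] {a : 𝔸}
    (ha : ∀ μ ∈ spectrum ℂ a, μ.re < 0) :
    IntegrableOn (fun z : ℝ => exp ((z : ℂ) • a)) (Ioi 0) := by
  have h1 : (1 : 𝔸) ∈ ⨆ μ, (Algebra.lmul ℂ 𝔸 a).maxGenEigenspace μ := by
    rw [Module.End.iSup_maxGenEigenspace_eq_top]; trivial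
  simpa using Submodule.iSup_induction _ h1
    (motive := fun b => IntegrableOn (fun z : ℝ => exp ((z : ℂ) • a) * b) (Ioi 0))
    (fun μ b hb => by
      obtain ⟨k, hk⟩ := (Module.End.mem_maxGenEigenspace _ _ _).mp hb
      have hk' : (a - algebraMap ℂ 𝔸 μ) ^ k * b = 0 := by
        rw [← hk, ← Algebra.algebraMap_eq_smul_one, ← AlgHom.commutes (Algebra.lmul ℂ 𝔸),
          ← map_sub, ← map_pow]
        rfl
      rcases eq_or_ne b 0 with rfl | hb0
      · simp
      exact integrableOn_Ioi_exp_smul_mul_of_pow_sub_mul_eq_zero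
        (ha μ (spectrum.mem_of_pow_sub_mul_eq_zero hk' hb0)) hk')
    (by simp) (fun b c hb hc => by simp_rw [mul_add]; exact hb.add hc)

end ComplexAlgebra

theorem mul_integral_Ioi_exp_smul {𝔸 : Type*} [NormedRing 𝔸] [NormedAlgebra ℝ 𝔸]
    [CompleteSpace 𝔸] {a : 𝔸} (h : IntegrableOn (fun z : ℝ => exp (z • a)) (Ioi 0)) :
    a * ∫ z in Ioi (0 : ℝ), exp (z • a) = -1 := by
  have hderiv : ∀ z : ℝ, HasDerivAt (fun z : ℝ => exp (z • a)) (a * exp (z • a)) z :=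
    hasDerivAt_exp_smul_const' a
  have h' : IntegrableOn (fun z : ℝ => a * exp (z • a)) (Ioi 0) := h.const_mul a
  have hlim := tendsto_zero_of_hasDerivAt_of_integrableOn_Ioi (fun z _ => hderiv z) h' h
  calc a * ∫ z in Ioi (0 : ℝ), exp (z • a)
      = ∫ z in Ioi (0 : ℝ), a * exp (z • a) :=
        ((ContinuousLinearMap.mul ℝ 𝔸 a).integral_comp_comm h).symm
    _ = 0 - exp ((0 : ℝ) • a) :=
        integral_Ioi_of_hasDerivAt_of_tendsto (hderiv 0).continuousAt.continuousWithinAt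
          (fun z _ => hderiv z) h' hlim
    _ = -1 := by simp

namespace Matrix

open scoped Norms.Operator

variable {n : Type*} [Fintype n] [DecidableEq n]

theorem exp_smul_eq_map_re (T : Matrix n n ℝ) (t : ℝ) :
    exp (t • T) = (exp ((t : ℂ) • T.map (algebraMap ℝ ℂ))).map Complex.re := by
  have hmap : (exp (t • T)).map (algebraMap ℝ ℂ) = exp ((t • T).map (algebraMap ℝ ℂ)) :=
    map_exp (𝔸 := Matrix n n ℝ) (𝔹 := Matrix n n ℂ) (algebraMap ℝ ℂ).mapMatrix
      (continuous_id.matrix_map Complex.continuous_ofReal) _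
  rw [show (t • T).map (algebraMap ℝ ℂ) = (t : ℂ) • T.map (algebraMap ℝ ℂ) by
    ext; simp] at hmap
  rw [← hmap, map_map]
  ext
  simp

theorem integrableOn_Ioi_exp_smul_apply_of_spectrum_re_neg (T : Matrix n n ℝ)
    (hT : ∀ μ ∈ spectrum ℂ (T.map (algebraMap ℝ ℂ)), μ.re < 0) (i j : n) :
    IntegrableOn (fun z : ℝ => exp (z • T) i j) (Ioi 0) := by
  have h := integrableOn_Ioi_exp_smul_of_spectrum_re_neg hT
  simp_rw [exp_smul_eq_map_re, map_apply]
  exact ((entryLinearMap ℂ ℂ i j).toContinuousLinearMap.integrable_comp h).re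

theorem neg_mul_integral_Ioi_exp_smul (T : Matrix n n ℝ)
    (h : ∀ i j, IntegrableOn (fun z : ℝ => exp (z • T) i j) (Ioi 0)) :
    -T * of (fun i j => ∫ z in Ioi (0 : ℝ), exp (z • T) i j) = 1 := by
  -- Obtained through `congr` because elaborating `IntegrableOn` for matrices directly picks the
  -- product topology, for which no `ContinuousENorm` instance is found.
  have hint := (integrable_finsetSum _ fun i _ => integrable_finsetSum _ fun j _ =>
    (singleLinearMap ℝ i j).toContinuousLinearMap.integrable_comp (h i j)).congr
    (g := fun z : ℝ => exp (z • T)) (ae_of_all _ fun z => (matrix_eq_sum_single _).symm)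
  have hentry : of (fun i j => ∫ z in Ioi (0 : ℝ), exp (z • T) i j) =
      ∫ z in Ioi (0 : ℝ), exp (z • T) := by
    ext i j
    exact (entryLinearMap ℝ ℝ i j).toContinuousLinearMap.integral_comp_comm hint
  rw [hentry, neg_mul, neg_eq_iff_eq_neg]
  exact mul_integral_Ioi_exp_smul hint

end Matrix

/-- If every complex eigenvalue of the real matrix `T` has strictly negative real part,
then `T` is invertible, `z ↦ exp(zT)` is entrywise integrable on `(0, ∞)`, and
`∫₀^∞ exp(zT) dz = (-T)⁻¹` entrywise. -/
theorem integral_matrix_exp {p : ℕ} (T : Matrix (Fin p) (Fin p) ℝ)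
    (hT : ∀ μ ∈ spectrum ℂ (T.map (algebraMap ℝ ℂ)), μ.re < 0) :
    IsUnit T ∧
    (∀ i j : Fin p,
      IntegrableOn (fun z : ℝ => NormedSpace.exp (z • T) i j) (Set.Ioi 0)) ∧
    ∀ i j : Fin p,
      ∫ z in Set.Ioi (0 : ℝ), NormedSpace.exp (z • T) i j = (-T)⁻¹ i j := by
  have hint := integrableOn_Ioi_exp_smul_apply_of_spectrum_re_neg T hT
  have hinv := neg_mul_integral_Ioi_exp_smul T hint
  refine ⟨by simpa using (IsUnit.of_mul_eq_one _ hinv).neg, hint, fun i j => ?_⟩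
  rw [inv_eq_right_inv hinv, of_apply]
end
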